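/- arXiv:2209.13213 — 10 statements merged into one kernel-verified Lean document; each statement's English description precedes it below -/
import Mathlib

section
/- Let a ≠ b. Then the spectrum of the coin operator C is contained in {a, b}, every element of σ(C) is an eigenvalue of C, and the equality σ(C) = σ_p(C) = {a, b} holds if and only if d*∘d ≠ I_H. -/
open ContinuousLinearMap

/-- For `a ≠ b`, the spectrum of the coin operator `C` is contained in
`{a, b}`, every element of `σ(C)` is an eigenvalue of `C`, and
`σ(C) = σ_p(C) = {a, b}` holds iff `d* ∘ d ≠ 1`. -/
theorem stmt_0 {H K : Type*}
    [NormedAddCommGroup H] [InnerProductSpace ℂ H] [CompleteSpace H] [Nontrivial H]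
    [NormedAddCommGroup K] [InnerProductSpace ℂ K] [CompleteSpace K] [Nontrivial K]
    (a b : ℝ) (hab : a ≠ b)
    (d : H →L[ℂ] K) (hd : d ∘L (adjoint d) = 1)
    (C : H →L[ℂ] H)
    (hC : C = (a : ℂ) • ((adjoint d) ∘L d) + (b : ℂ) • (1 - (adjoint d) ∘L d)) :
    spectrum ℂ C ⊆ {(a : ℂ), (b : ℂ)} ∧
    (∀ μ ∈ spectrum ℂ C, ∃ ψ : H, ψ ≠ 0 ∧ C ψ = μ • ψ) ∧
    ((spectrum ℂ C = {(a : ℂ), (b : ℂ)} ∧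
      {μ : ℂ | ∃ ψ : H, ψ ≠ 0 ∧ C ψ = μ • ψ} = {(a : ℂ), (b : ℂ)}) ↔
      (adjoint d) ∘L d ≠ 1) := by
  have hab' : (a : ℂ) ≠ (b : ℂ) := by exact_mod_cast hab
  have hd' : ∀ y : K, d (adjoint d y) = y := by
    intro y
    have := ContinuousLinearMap.ext_iff.mp hd y
    simpa using this
  set P : H →L[ℂ] H := adjoint d ∘L d with hPdef
  have hP2 : P * P = P := by
    ext x
    simp [hPdef, ContinuousLinearMap.mul_apply, ContinuousLinearMap.comp_apply, hd']
  have hQ2 : (1 - P) * (1 - P) = 1 - P := by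
    rw [sub_mul, one_mul, mul_sub, mul_one, hP2]
    abel
  have hPQ : P * (1 - P) = 0 := by rw [mul_sub, mul_one, hP2, sub_self]
  have hQP : (1 - P) * P = 0 := by rw [sub_mul, one_mul, hP2, sub_self]
  have hCP : C = (a : ℂ) • P + (b : ℂ) • (1 - P) := hC
  have hmul : ∀ s t u v : ℂ, (s • P + t • (1 - P)) * (u • P + v • (1 - P))
      = (s * u) • P + (t * v) • (1 - P) := by
    intro s t u v
    simp only [add_mul, mul_add, smul_mul_assoc, mul_smul_comm, hP2, hQ2, hPQ, hQP,
      smul_zero, smul_smul]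
    module
  -- the resolvent construction
  have hunit : ∀ μ : ℂ, μ ≠ (a : ℂ) → μ ≠ (b : ℂ) →
      IsUnit (algebraMap ℂ (H →L[ℂ] H) μ - C) := by
    intro μ h1 h2
    have hx : algebraMap ℂ (H →L[ℂ] H) μ - C
        = (μ - a) • P + (μ - b) • (1 - P) := by
      rw [hCP, Algebra.algebraMap_eq_smul_one]
      module
    have ha0 : μ - (a : ℂ) ≠ 0 := sub_ne_zero.mpr h1
    have hb0 : μ - (b : ℂ) ≠ 0 := sub_ne_zero.mpr h2
    refine ⟨⟨algebraMap ℂ (H →L[ℂ] H) μ - C,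
      (μ - a)⁻¹ • P + (μ - b)⁻¹ • (1 - P), ?_, ?_⟩, rfl⟩
    · rw [hx, hmul, mul_inv_cancel₀ ha0, mul_inv_cancel₀ hb0, one_smul, one_smul]
      abel
    · rw [hx, hmul, inv_mul_cancel₀ ha0, inv_mul_cancel₀ hb0, one_smul, one_smul]
      abel
  -- spectrum subset
  have hsub : spectrum ℂ C ⊆ {(a : ℂ), (b : ℂ)} := by
    intro μ hμ
    by_contra h
    simp only [Set.mem_insert_iff, Set.mem_singleton_iff] at h
    push_neg at h
    exact (spectrum.mem_iff.mp hμ) (hunit μ h.1 h.2)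
  -- eigenvalue implies in spectrum
  have mem_spec : ∀ μ : ℂ, (∃ ψ : H, ψ ≠ 0 ∧ C ψ = μ • ψ) → μ ∈ spectrum ℂ C := by
    rintro μ ⟨ψ, hψ, hCψ⟩
    rw [spectrum.mem_iff]
    intro hu
    have h0 : (algebraMap ℂ (H →L[ℂ] H) μ - C) ψ = 0 := by
      simp [Algebra.algebraMap_eq_smul_one, hCψ]
    have h2 := congrArg (fun T : H →L[ℂ] H => T ψ) hu.unit.inv_mul
    simp only [ContinuousLinearMap.mul_apply, ContinuousLinearMap.one_apply,
      IsUnit.unit_spec, h0, map_zero] at h2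
    exact hψ h2.symm
  -- P ≠ 0
  have hPne0 : P ≠ 0 := by
    intro h
    obtain ⟨y, hy⟩ := exists_ne (0 : K)
    apply hy
    have : d (P (adjoint d y)) = y := by simp [hPdef, hd']
    rw [h] at this
    simpa using this.symm
  -- a is always an eigenvalue
  have ha_eig : ∃ ψ : H, ψ ≠ 0 ∧ C ψ = (a : ℂ) • ψ := by
    have : ∃ x : H, P x ≠ 0 := by
      by_contra h
      push_neg at h
      exact hPne0 (ContinuousLinearMap.ext fun x => by simpa using h x)
    obtain ⟨x, hx⟩ := this
    refine ⟨P x, hx, ?_⟩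
    have hPP : P (P x) = P x := ContinuousLinearMap.ext_iff.mp hP2 x
    rw [hCP]
    simp [hPP]
  -- b eigenvalue iff P ≠ 1
  have hb_eig : P ≠ 1 → ∃ ψ : H, ψ ≠ 0 ∧ C ψ = (b : ℂ) • ψ := by
    intro hP1
    have : ∃ x : H, P x ≠ x := by
      by_contra h
      push_neg at h
      exact hP1 (ContinuousLinearMap.ext fun x => by simpa using h x)
    obtain ⟨x, hx⟩ := this
    refine ⟨x - P x, fun h => hx (sub_eq_zero.mp h).symm, ?_⟩
    have hPP : P (P x) = P x := ContinuousLinearMap.ext_iff.mp hP2 x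
    rw [hCP]
    simp [map_sub, hPP, smul_sub]
  have hbnot : P = 1 → (b : ℂ) ∉ spectrum ℂ C := by
    intro hP1 hmem
    apply spectrum.mem_iff.mp hmem
    have hx : algebraMap ℂ (H →L[ℂ] H) (b : ℂ) - C
        = algebraMap ℂ (H →L[ℂ] H) ((b : ℂ) - (a : ℂ)) := by
      rw [hCP, hP1, Algebra.algebraMap_eq_smul_one, Algebra.algebraMap_eq_smul_one]
      module
    rw [hx]
    exact (isUnit_iff_ne_zero.mpr (sub_ne_zero.mpr hab'.symm)).map (algebraMap ℂ _)
  refine ⟨hsub, ?_, ?_⟩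
  · intro μ hμ
    rcases (by simpa using hsub hμ : μ = (a : ℂ) ∨ μ = (b : ℂ)) with rfl | rfl
    · exact ha_eig
    · exact hb_eig fun h1 => hbnot h1 hμ
  · constructor
    · rintro ⟨hσ, -⟩ hP1
      exact hbnot hP1 (hσ ▸ (by simp : (b : ℂ) ∈ ({(a : ℂ), (b : ℂ)} : Set ℂ)))
    · intro hP1
      have hbe := hb_eig hP1
      have haσ := mem_spec _ ha_eig
      have hbσ := mem_spec _ hbe
      constructor
      · apply Set.Subset.antisymm hsub
        intro μ hμ
        rcases (by simpa using hμ : μ = (a : ℂ) ∨ μ = (b : ℂ)) with rfl | rfl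
        · exact haσ
        · exact hbσ
      · ext μ
        simp only [Set.mem_setOf_eq, Set.mem_insert_iff, Set.mem_singleton_iff]
        constructor
        · intro h
          simpa using hsub (mem_spec μ h)
        · rintro (rfl | rfl)
          exacts [ha_eig, hbe]
end

section
/- The commutator of U with its adjoint satisfies [U, U*] = (a² − b²)·[S, d*∘d]∘S, where [A, B] := A∘B − B∘A. Consequently, U is normal (U∘U* = U*∘U) if and only if a² = b² or S∘(d*∘d) = (d*∘d)∘S. -/
open ContinuousLinearMap

/-- `[U, U*] = (a² − b²)·[S, d*∘d]∘S`, and consequently `U` is normal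
iff `a² = b²` or `S` commutes with `d*∘d`. -/
theorem stmt_1 {H K : Type*}
    [NormedAddCommGroup H] [InnerProductSpace ℂ H] [CompleteSpace H] [Nontrivial H]
    [NormedAddCommGroup K] [InnerProductSpace ℂ K] [CompleteSpace K] [Nontrivial K]
    (a b : ℝ)
    (d : H →L[ℂ] K) (hd : d ∘L (adjoint d) = 1)
    (S : H →L[ℂ] H) (hS : IsSelfAdjoint S) (hS2 : S ∘L S = 1)
    (C : H →L[ℂ] H)
    (hC : C = (a : ℂ) • ((adjoint d) ∘L d) + (b : ℂ) • (1 - (adjoint d) ∘L d))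
    (U : H →L[ℂ] H) (hU : U = S ∘L C) :
    U ∘L (adjoint U) - (adjoint U) ∘L U =
      ((a ^ 2 - b ^ 2 : ℝ) : ℂ) •
        ((S ∘L ((adjoint d) ∘L d) - ((adjoint d) ∘L d) ∘L S) ∘L S) ∧
    (U ∘L (adjoint U) = (adjoint U) ∘L U ↔
      a ^ 2 = b ^ 2 ∨ S ∘L ((adjoint d) ∘L d) = ((adjoint d) ∘L d) ∘L S) := by
  set P := adjoint d ∘L d with hPdef
  have hP : P ∘L P = P := by
    rw [hPdef, comp_assoc, ← comp_assoc d, hd, one_def, id_comp]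
  have hPadj : adjoint P = P := by
    rw [hPdef, adjoint_comp, adjoint_adjoint]
  have hCadj : adjoint C = C := by
    rw [hC, ← star_eq_adjoint]
    simp [star_smul, star_eq_adjoint, hPadj, RCLike.star_def, Complex.conj_ofReal]
  have hUadj : adjoint U = C ∘L S := by
    rw [hU, adjoint_comp, hCadj, hS.adjoint_eq]
  have hCC : C ∘L C = ((b : ℂ) ^ 2) • (1 : H →L[ℂ] H)
      + (((a : ℂ) ^ 2 - (b : ℂ) ^ 2)) • P := by
    rw [hC]
    simp only [add_comp, comp_add, smul_comp, comp_smul, sub_comp, comp_sub,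
      one_def, id_comp, comp_id, hP]
    module
  have e1 : U ∘L adjoint U = ((b : ℂ) ^ 2) • (1 : H →L[ℂ] H)
      + (((a : ℂ) ^ 2 - (b : ℂ) ^ 2)) • ((S ∘L P) ∘L S) := by
    rw [hUadj, hU, comp_assoc, ← comp_assoc C C S, hCC]
    simp only [add_comp, smul_comp, comp_add, comp_smul, one_def, id_comp, comp_id,
      ← comp_assoc, hS2]
  have e2 : adjoint U ∘L U = ((b : ℂ) ^ 2) • (1 : H →L[ℂ] H)
      + (((a : ℂ) ^ 2 - (b : ℂ) ^ 2)) • P := by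
    rw [hUadj, hU, comp_assoc, ← comp_assoc S S C, hS2, one_def, id_comp, hCC, ← one_def]
  have key : U ∘L (adjoint U) - (adjoint U) ∘L U =
      ((a ^ 2 - b ^ 2 : ℝ) : ℂ) • ((S ∘L P - P ∘L S) ∘L S) := by
    have hcast : ((a ^ 2 - b ^ 2 : ℝ) : ℂ) = (a : ℂ) ^ 2 - (b : ℂ) ^ 2 := by
      push_cast; ring
    rw [e1, e2, hcast, sub_comp, comp_assoc P S S, hS2, one_def, comp_id]
    module
  refine ⟨key, ?_⟩
  constructor
  · intro hN
    by_cases hab : a ^ 2 = b ^ 2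
    · exact Or.inl hab
    · refine Or.inr ?_
      have h0 : ((a ^ 2 - b ^ 2 : ℝ) : ℂ) • ((S ∘L P - P ∘L S) ∘L S) = 0 := by
        rw [← key, hN, sub_self]
      have hc : ((a ^ 2 - b ^ 2 : ℝ) : ℂ) ≠ 0 := by
        simp only [ne_eq, Complex.ofReal_eq_zero, sub_eq_zero]
        exact hab
      have h1 : (S ∘L P - P ∘L S) ∘L S = 0 := by
        rcases smul_eq_zero.mp h0 with h | h
        · exact absurd h hc
        · exact h
      have h2 : ((S ∘L P - P ∘L S) ∘L S) ∘L S = 0 := by rw [h1, zero_comp]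
      rw [comp_assoc, hS2, one_def, comp_id] at h2
      exact sub_eq_zero.mp h2
  · rintro (h | h)
    · have hz : ((a ^ 2 - b ^ 2 : ℝ) : ℂ) = 0 := by
        simp [sub_eq_zero, h]
      rw [← sub_eq_zero, key, hz, zero_smul]
    · have hz : S ∘L P - P ∘L S = 0 := sub_eq_zero.mpr h
      rw [← sub_eq_zero, key, hz, zero_comp, smul_zero]
end

section
/- Assume d*∘d ≠ I_H, S ≠ I_H, S ≠ −I_H, a ≠ b and a ≠ −b. Then the residual spectrum of U is empty: for every λ ∈ ℂ, if U − λ·I is injective then its range is dense in H. -/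
/-!
Since `S` is a self-adjoint involution, `U* = C S = S U S`, so a nonzero `y` orthogonal to the
range of `U - λ` yields the eigenvector `z = S y` of `U` for `conj λ`; it remains to see that the
point spectrum of `U` is closed under conjugation. The coin `C` is self-adjoint with
`C² = (a + b) C - a b`. If `S C z = μ z` with `μ` non-real, then `⟪z, C z⟫ = μ ⟪z, S z⟫` with both
inner products real, so both vanish; comparing `‖C z‖² = |μ|² ‖z‖²` with
`‖C z‖² = ⟪z, C² z⟫ = -a b ‖z‖²` gives `|μ|² = -a b`, and then `C z + (a + b) μ / (conj μ - μ) • z`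
is an eigenvector for `conj μ`, nonzero because `⟪z, C z⟫ = 0` while `a + b ≠ 0`.
-/

open ContinuousLinearMap
open scoped InnerProductSpace ComplexConjugate

theorem ContinuousLinearMap.denseRange_iff_ker_adjoint_eq_bot {𝕜 E F : Type*} [RCLike 𝕜]
    [NormedAddCommGroup E] [InnerProductSpace 𝕜 E] [CompleteSpace E]
    [NormedAddCommGroup F] [InnerProductSpace 𝕜 F] [CompleteSpace F] (T : E →L[𝕜] F) :
    DenseRange T ↔ (adjoint T).ker = ⊥ := by
  rw [← orthogonal_range, ← Submodule.topologicalClosure_eq_top_iff,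
    ← Submodule.dense_iff_topologicalClosure_eq_top]
  simp [DenseRange, LinearMap.coe_range]

theorem IsSelfAdjoint.inner_apply_left {𝕜 E : Type*} [RCLike 𝕜] [NormedAddCommGroup E]
    [InnerProductSpace 𝕜 E] [CompleteSpace E] {A : E →L[𝕜] E} (hA : IsSelfAdjoint A) (x y : E) :
    ⟪A x, y⟫_𝕜 = ⟪x, A y⟫_𝕜 :=
  hA.isSymmetric x y

theorem IsIdempotentElem.mul_self_smul_add_smul_one_sub {R A : Type*} [CommRing R] [Ring A]
    [Algebra R A] {P : A} (hP : IsIdempotentElem P) (a b : R) :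
    (a • P + b • (1 - P)) * (a • P + b • (1 - P)) =
      (a + b) • (a • P + b • (1 - P)) - (a * b) • 1 := by
  simp only [mul_add, add_mul, mul_sub, sub_mul, smul_mul_smul_comm, mul_one, one_mul, hP.eq]
  module

section
variable {E F : Type*} [NormedAddCommGroup E] [InnerProductSpace ℂ E] [CompleteSpace E]
  [NormedAddCommGroup F] [InnerProductSpace ℂ F] [CompleteSpace F] (d : E →L[ℂ] F)

theorem isIdempotentElem_adjoint_comp_self (hd : d ∘L adjoint d = 1) :
    IsIdempotentElem (adjoint d ∘L d) := by
  change (adjoint d ∘L d) ∘L (adjoint d ∘L d) = _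
  rw [comp_assoc, ← comp_assoc d, hd]
  rfl

theorem isSelfAdjoint_adjoint_comp_self : IsSelfAdjoint (adjoint d ∘L d) := by
  rw [isSelfAdjoint_iff', adjoint_comp, adjoint_adjoint]

end

section
variable {E : Type*} [NormedAddCommGroup E] [InnerProductSpace ℂ E]
  {S C : E →L[ℂ] E} {μ s p : ℂ} {z : E}

theorem apply_apply_of_comp_self_eq_one (hS2 : S ∘L S = 1) (x : E) : S (S x) = x :=
  DFunLike.congr_fun hS2 x

theorem apply_eq_smul_of_comp_apply_eq_smul (hS2 : S ∘L S = 1) (h : S (C z) = μ • z) :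
    C z = μ • S z := by
  rw [← map_smul, ← h, apply_apply_of_comp_self_eq_one hS2]

variable [CompleteSpace E]

theorem inner_map_self_eq_zero_of_comp_apply_eq_smul (hS : IsSelfAdjoint S)
    (hC : IsSelfAdjoint C) (hS2 : S ∘L S = 1) (hμ : μ.im ≠ 0) (h : S (C z) = μ • z) :
    ⟪z, C z⟫_ℂ = 0 := by
  have hCz : ⟪z, C z⟫_ℂ = μ * ⟪z, S z⟫_ℂ := by
    rw [apply_eq_smul_of_comp_apply_eq_smul hS2 h, inner_smul_right]
  have hSre : (⟪z, S z⟫_ℂ).im = 0 := hS.isSymmetric.im_inner_self_apply z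
  have hCre : (⟪z, C z⟫_ℂ).im = 0 := hC.isSymmetric.im_inner_self_apply z
  suffices ⟪z, S z⟫_ℂ = 0 by rw [hCz, this, mul_zero]
  rw [hCz, Complex.mul_im, hSre, mul_zero, zero_add] at hCre
  exact Complex.ext ((mul_eq_zero.mp hCre).resolve_left hμ) hSre

theorem mul_conj_eq_neg_of_comp_apply_eq_smul (hS : IsSelfAdjoint S) (hC : IsSelfAdjoint C)
    (hS2 : S ∘L S = 1) (hCC : C ∘L C = s • C - p • 1) (hμ : μ.im ≠ 0) (hz : z ≠ 0)
    (h : S (C z) = μ • z) : μ * conj μ = -p := by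
  have hzCz := inner_map_self_eq_zero_of_comp_apply_eq_smul hS hC hS2 hμ h
  have hnorm : ⟪C z, C z⟫_ℂ = μ * conj μ * ⟪z, z⟫_ℂ := by
    rw [apply_eq_smul_of_comp_apply_eq_smul hS2 h, inner_smul_left, inner_smul_right,
      hS.inner_apply_left, apply_apply_of_comp_self_eq_one hS2]
    ring
  have hsq : ⟪C z, C z⟫_ℂ = -p * ⟪z, z⟫_ℂ := by
    rw [hC.inner_apply_left, ← comp_apply, hCC]
    simp only [sub_apply, smul_apply, one_apply_eq_self, inner_sub_right, inner_smul_right, hzCz]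
    ring
  exact mul_right_cancel₀ (inner_self_ne_zero.mpr hz) (hnorm.symm.trans hsq)

theorem exists_comp_apply_eq_conj_smul (hS : IsSelfAdjoint S) (hC : IsSelfAdjoint C)
    (hS2 : S ∘L S = 1) (hCC : C ∘L C = s • C - p • 1) (hs : s ≠ 0) (hz : z ≠ 0)
    (h : S (C z) = μ • z) : ∃ w ≠ 0, S (C w) = conj μ • w := by
  by_cases hμ : μ.im = 0
  · exact ⟨z, hz, by rwa [Complex.conj_eq_iff_im.mpr hμ]⟩
  have hμ0 : μ ≠ 0 := fun h0 => hμ (by rw [h0, Complex.zero_im])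
  have hsub : conj μ - μ ≠ 0 := by
    rw [sub_ne_zero]; exact fun h' => hμ (Complex.conj_eq_iff_im.mp h')
  have hzCz := inner_map_self_eq_zero_of_comp_apply_eq_smul hS hC hS2 hμ h
  have hp := mul_conj_eq_neg_of_comp_apply_eq_smul hS hC hS2 hCC hμ hz h
  have hSz : S z = μ⁻¹ • C z := by
    rw [apply_eq_smul_of_comp_apply_eq_smul hS2 h, smul_smul, inv_mul_cancel₀ hμ0, one_smul]
  have hCCz : C (C z) = s • C z - p • z := by
    rw [← comp_apply, hCC]; rfl
  set c := s * μ / (conj μ - μ) with hc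
  have hc' : (s + c) * μ = conj μ * c := by
    rw [hc]; field_simp; ring
  have hp' : -p * μ⁻¹ = conj μ := by
    rw [← hp]; field_simp
  have hc0 : c ≠ 0 := div_ne_zero (mul_ne_zero hs hμ0) hsub
  refine ⟨C z + c • z, fun hw => ?_, ?_⟩
  · refine mul_ne_zero (neg_ne_zero.mpr hc0) (inner_self_ne_zero.mpr hz) ?_
    rw [neg_mul, ← inner_smul_right, ← inner_neg_right, ← eq_neg_of_add_eq_zero_left hw, hzCz]
  · rw [map_add, map_smul, hCCz, map_add, map_sub, map_smul, map_smul, map_smul, h, hSz]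
    linear_combination (norm := module) hp' • C z + hc' • z

end

theorem stmt_5_general {H K : Type*}
    [NormedAddCommGroup H] [InnerProductSpace ℂ H] [CompleteSpace H]
    [NormedAddCommGroup K] [InnerProductSpace ℂ K] [CompleteSpace K]
    (a b : ℝ)
    (d : H →L[ℂ] K) (hd : d ∘L (adjoint d) = 1)
    (S : H →L[ℂ] H) (hS : IsSelfAdjoint S) (hS2 : S ∘L S = 1)
    (C : H →L[ℂ] H)
    (hC : C = (a : ℂ) • ((adjoint d) ∘L d) + (b : ℂ) • (1 - (adjoint d) ∘L d))
    (U : H →L[ℂ] H) (hU : U = S ∘L C)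
    (h5 : a ≠ -b) :
    ∀ lam : ℂ, Function.Injective ⇑(U - lam • (1 : H →L[ℂ] H)) →
      DenseRange ⇑(U - lam • (1 : H →L[ℂ] H)) := by
  intro lam hinj
  have hP := isSelfAdjoint_adjoint_comp_self d
  have hCsa : IsSelfAdjoint C := by
    have ha : IsSelfAdjoint (a : ℂ) := Complex.conj_ofReal a
    have hb : IsSelfAdjoint (b : ℂ) := Complex.conj_ofReal b
    rw [hC]
    exact (ha.smul hP).add (hb.smul ((IsSelfAdjoint.one _).sub hP))
  have hCC : C ∘L C = ((a : ℂ) + b) • C - ((a : ℂ) * b) • 1 := by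
    rw [hC]
    exact (isIdempotentElem_adjoint_comp_self d hd).mul_self_smul_add_smul_one_sub _ _
  have hab : (a : ℂ) + b ≠ 0 := by
    exact_mod_cast fun h : a + b = 0 => h5 (eq_neg_of_add_eq_zero_left h)
  rw [denseRange_iff_ker_adjoint_eq_bot, Submodule.eq_bot_iff]
  intro y hy
  by_contra hy0
  have hCSy : C (S y) = conj lam • y := by
    simpa [hU, adjoint_comp, map_smulₛₗ, adjoint_one, hS.adjoint_eq, hCsa.adjoint_eq,
      sub_eq_zero] using hy
  obtain ⟨w, hw0, hw⟩ := exists_comp_apply_eq_conj_smul hS hCsa hS2 hCC hab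
    (fun h => hy0 (by rw [← apply_apply_of_comp_self_eq_one hS2 y, h, map_zero]))
    (show S (C (S y)) = conj lam • S y by rw [hCSy, map_smul])
  refine hw0 (hinj ?_)
  simp [hU, hw]

/-- Under the standing assumptions (`d*∘d ≠ 1`, `S ≠ ±1`, `a ≠ ±b`),
the residual spectrum of `U` is empty: injectivity of `U − λ` implies dense range. -/
theorem stmt_5 {H K : Type*}
    [NormedAddCommGroup H] [InnerProductSpace ℂ H] [CompleteSpace H] [Nontrivial H]
    [NormedAddCommGroup K] [InnerProductSpace ℂ K] [CompleteSpace K] [Nontrivial K]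
    (a b : ℝ)
    (d : H →L[ℂ] K) (hd : d ∘L (adjoint d) = 1)
    (S : H →L[ℂ] H) (hS : IsSelfAdjoint S) (hS2 : S ∘L S = 1)
    (C : H →L[ℂ] H)
    (hC : C = (a : ℂ) • ((adjoint d) ∘L d) + (b : ℂ) • (1 - (adjoint d) ∘L d))
    (U : H →L[ℂ] H) (hU : U = S ∘L C)
    (h1 : (adjoint d) ∘L d ≠ 1) (h2 : S ≠ 1) (h3 : S ≠ -1)
    (h4 : a ≠ b) (h5 : a ≠ -b) :
    ∀ lam : ℂ, Function.Injective ⇑(U - lam • (1 : H →L[ℂ] H)) →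
      DenseRange ⇑(U - lam • (1 : H →L[ℂ] H)) :=
  stmt_5_general a b d hd S hS hS2 C hC U hU h5
end

section
/- Assume the standing assumptions. If λ ∈ ℂ with λ ≠ 0 and ψ ∈ H satisfy Uψ = λψ, then the vector f := dψ ∈ K satisfies Tf = φ_{a,b}(λ)·f. -/
open ContinuousLinearMap

/-- Under the standing assumptions, if `Uψ = λψ` with `λ ≠ 0`, then
`f := dψ` satisfies `Tf = φ_{a,b}(λ)·f`, where `φ_{a,b}(z) = (z − ab·z⁻¹)/(a−b)`. -/
theorem stmt_6 {H K : Type*}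
    [NormedAddCommGroup H] [InnerProductSpace ℂ H] [CompleteSpace H] [Nontrivial H]
    [NormedAddCommGroup K] [InnerProductSpace ℂ K] [CompleteSpace K] [Nontrivial K]
    (a b : ℝ)
    (d : H →L[ℂ] K) (hd : d ∘L (adjoint d) = 1)
    (S : H →L[ℂ] H) (hS : IsSelfAdjoint S) (hS2 : S ∘L S = 1)
    (C : H →L[ℂ] H)
    (hC : C = (a : ℂ) • ((adjoint d) ∘L d) + (b : ℂ) • (1 - (adjoint d) ∘L d))
    (U : H →L[ℂ] H) (hU : U = S ∘L C)
    (T : K →L[ℂ] K) (hT : T = d ∘L S ∘L (adjoint d))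
    (h1 : (adjoint d) ∘L d ≠ 1) (h2 : S ≠ 1) (h3 : S ≠ -1)
    (h4 : a ≠ b) (h5 : a ≠ -b) (h6 : a * b ≠ 0)
    (lam : ℂ) (hlam : lam ≠ 0) (ψ : H) (hψ : U ψ = lam • ψ) :
    T (d ψ) = ((lam - (a * b : ℝ) * lam⁻¹) / ((a : ℂ) - (b : ℝ))) • d ψ := by
  have hab : (a : ℂ) - (b : ℂ) ≠ 0 := sub_ne_zero.mpr (by exact_mod_cast h4)
  have hdd : ∀ x : K, d (adjoint d x) = x := by
    intro x
    have := ContinuousLinearMap.ext_iff.mp hd x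
    simpa using this
  have hSS : ∀ x : H, S (S x) = x := by
    intro x
    have := ContinuousLinearMap.ext_iff.mp hS2 x
    simpa using this
  have hSC : S (C ψ) = lam • ψ := by
    rw [hU] at hψ; simpa using hψ
  have hC1 : C ψ = lam • S ψ := by
    have h := congrArg S hSC
    rw [hSS] at h
    simpa [map_smul] using h
  have hdC : d (C ψ) = (a : ℂ) • d ψ := by
    rw [hC]
    simp [ContinuousLinearMap.add_apply, ContinuousLinearMap.smul_apply,
      ContinuousLinearMap.sub_apply, ContinuousLinearMap.comp_apply,
      ContinuousLinearMap.one_apply, hdd]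
  have hdS : lam • d (S ψ) = (a : ℂ) • d ψ := by
    rw [← map_smul, ← hC1, hdC]
  have hdS' : d (S ψ) = (↑a * lam⁻¹) • d ψ := by
    have h := congrArg (fun x => lam⁻¹ • x) hdS
    simp only [smul_smul, inv_mul_cancel₀ hlam, one_smul] at h
    rw [h]; ring_nf
  have hexp : ((a : ℂ) - b) • S ((adjoint d) (d ψ)) + (b : ℂ) • S ψ = lam • ψ := by
    rw [← hSC, hC]
    simp only [ContinuousLinearMap.add_apply, ContinuousLinearMap.smul_apply,
      ContinuousLinearMap.sub_apply, ContinuousLinearMap.comp_apply,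
      ContinuousLinearMap.one_apply, map_add, map_smul, map_sub, sub_smul, smul_sub]
    abel
  have hTd : ((a : ℂ) - b) • T (d ψ) + (b : ℂ) • d (S ψ) = lam • d ψ := by
    have h := congrArg d hexp
    rw [hT]
    simpa [map_add, map_smul] using h
  have key : ((a : ℂ) - b) • T (d ψ) = ((a : ℂ) - b) •
      (((lam - (a * b : ℝ) * lam⁻¹) / ((a : ℂ) - (b : ℝ))) • d ψ) := by
    have h : ((a : ℂ) - b) • T (d ψ) = lam • d ψ - (b : ℂ) • d (S ψ) := by
      rw [← hTd]; abel
    rw [h, hdS', smul_smul, ← sub_smul, smul_smul]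
    congr 1
    push_cast
    field_simp
  exact smul_right_injective K hab key
end

section
/- Assume the standing assumptions. If λ ∈ ℂ with λ ≠ 0, λ ≠ b, λ ≠ −b, and ψ ∈ H with ψ ≠ 0 satisfy Uψ = λψ, then dψ ≠ 0 (so that φ_{a,b}(λ) is an eigenvalue of T), and moreover either λ is real (Im λ = 0) or |λ|² = −a·b. -/
open ContinuousLinearMap

/-!
Write `P = d†d` and `C = b + (a - b) P`. From `S C ψ = λ ψ` and `S² = 1` we get `C ψ = λ S ψ`.
If `d ψ = 0` this reads `b ψ = λ S ψ`, and applying `S` once more forces `λ² = b²`.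
Otherwise, since `d P = d`, applying `d` gives `a d ψ = λ d S ψ`, while applying `d S` gives
`λ d ψ = b d S ψ + (a - b) T d ψ`; eliminating `d S ψ` yields `T d ψ = φ_{a,b}(λ) d ψ`.
As `T` is self-adjoint, `φ_{a,b}(λ)` is real, and
`Im (λ - ab λ⁻¹) = Im λ · (1 + ab / |λ|²)` gives the dichotomy.
-/

theorem Complex.im_eq_zero_or_sq_norm_eq_of_im_sub_mul_inv {z : ℂ} {c : ℝ} (hz : z ≠ 0)
    (h : (z - c * z⁻¹).im = 0) : z.im = 0 ∨ ‖z‖ ^ 2 = -c := by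
  have hn : normSq z ≠ 0 := normSq_eq_zero.not.mpr hz
  have hfac : z.im * (normSq z + c) = 0 := by
    simp only [sub_im, im_ofReal_mul, inv_im] at h
    field_simp at h
    linear_combination h
  rw [Complex.sq_norm]
  rcases mul_eq_zero.mp hfac with him | hsum
  · exact .inl him
  · exact .inr (by linarith)

theorem IsSelfAdjoint.im_eq_zero_of_apply_eq_smul {E : Type*} [NormedAddCommGroup E]
    [InnerProductSpace ℂ E] [CompleteSpace E] {T : E →L[ℂ] E} (hT : IsSelfAdjoint T)
    {μ : ℂ} {v : E} (hv : v ≠ 0) (h : T v = μ • v) : μ.im = 0 :=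
  Complex.conj_eq_iff_im.mp <| hT.isSymmetric.conj_eigenvalue_eq_self <|
    Module.End.hasEigenvalue_of_hasEigenvector ⟨Module.End.mem_eigenspace_iff.mpr h, hv⟩

theorem sq_eq_sq_of_smul_apply_eq_smul {𝕜 E : Type*} [Field 𝕜] [AddCommGroup E] [Module 𝕜 E]
    {S : E →ₗ[𝕜] E} (hS2 : ∀ x, S (S x) = x) {b μ : 𝕜} {ψ : E} (hψ0 : ψ ≠ 0)
    (h : b • S ψ = μ • ψ) : μ ^ 2 = b ^ 2 := by
  have hsq : (μ ^ 2) • ψ = (b ^ 2) • ψ :=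
    calc (μ ^ 2) • ψ = μ • (b • S ψ) := by rw [h, sq, mul_smul]
      _ = b • S (μ • ψ) := by rw [map_smul, smul_comm]
      _ = (b ^ 2) • ψ := by rw [← h, map_smul, hS2, sq, mul_smul]
  exact smul_left_injective 𝕜 hψ0 hsq

section CoinedWalk

variable {H K : Type*} [NormedAddCommGroup H] [InnerProductSpace ℂ H] [CompleteSpace H]
  [NormedAddCommGroup K] [InnerProductSpace ℂ K] [CompleteSpace K]

noncomputable def coin (d : H →L[ℂ] K) (a b : ℂ) : H →L[ℂ] H :=
  a • (adjoint d ∘L d) + b • (1 - adjoint d ∘L d)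

variable {d : H →L[ℂ] K} {a b : ℂ}

theorem coin_apply (x : H) : coin d a b x = b • x + (a - b) • adjoint d (d x) := by
  simp only [coin, add_apply, smul_apply, sub_apply, one_apply_eq_self, comp_apply]
  module

theorem apply_coin (hd : d ∘L adjoint d = 1) (x : H) : d (coin d a b x) = a • d x := by
  have hdd : d (adjoint d (d x)) = d x := congr($hd (d x))
  rw [coin_apply, map_add, map_smul, map_smul, hdd]
  module

variable {S : H →L[ℂ] H} {μ : ℂ} {ψ : H}

theorem coin_apply_eq_smul_apply (hS2 : S ∘L S = 1) (hψ : S (coin d a b ψ) = μ • ψ) :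
    coin d a b ψ = μ • S ψ := by
  rw [← map_smul, ← hψ]
  exact congr($hS2 (coin d a b ψ)).symm

theorem apply_ne_zero_of_apply_coin_eq_smul (hS2 : S ∘L S = 1) (hψ0 : ψ ≠ 0)
    (hψ : S (coin d a b ψ) = μ • ψ) (hμb : μ ≠ b) (hμb' : μ ≠ -b) : d ψ ≠ 0 := by
  intro hdψ
  have hbψ : b • S ψ = μ • ψ := by
    rw [← map_smul, ← hψ, coin_apply, hdψ, map_zero, smul_zero, add_zero]
  have hS2' : ∀ x, S (S x) = x := fun x => congr($hS2 x)
  have hsq := sq_eq_sq_of_smul_apply_eq_smul (S := (S : H →ₗ[ℂ] H)) hS2' hψ0 hbψ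
  rcases sq_eq_sq_iff_eq_or_eq_neg.mp hsq with h | h
  exacts [hμb h, hμb' h]

theorem comp_comp_adjoint_apply_eq_smul (hd : d ∘L adjoint d = 1) (hS2 : S ∘L S = 1)
    (hψ : S (coin d a b ψ) = μ • ψ) (hμ : μ ≠ 0) (hab : a ≠ b) :
    (d ∘L S ∘L adjoint d) (d ψ) = ((μ - a * b * μ⁻¹) / (a - b)) • d ψ := by
  set u := d (S (adjoint d (d ψ)))
  have hcoin := coin_apply_eq_smul_apply hS2 hψ
  have hd_coin : a • d ψ = μ • d (S ψ) := by
    rw [← apply_coin hd, hcoin, map_smul]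
  have hdS_coin : μ • d ψ = b • d (S ψ) + (a - b) • u := by
    rw [← map_smul, ← hψ, coin_apply, map_add, map_smul, map_smul, map_add, map_smul, map_smul]
  have hu : ((a - b) * μ) • u = (μ ^ 2 - a * b) • d ψ := by
    linear_combination (norm := module) b • hd_coin - μ • hdS_coin
  have hab' : (a - b) * μ ≠ 0 := mul_ne_zero (sub_ne_zero.mpr hab) hμ
  calc (d ∘L S ∘L adjoint d) (d ψ) = ((a - b) * μ)⁻¹ • ((a - b) * μ) • u :=
        (inv_smul_smul₀ hab' u).symm
    _ = ((μ - a * b * μ⁻¹) / (a - b)) • d ψ := by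
        rw [hu, smul_smul]
        congr 1
        field_simp

end CoinedWalk

theorem stmt_7_general {H K : Type*}
    [NormedAddCommGroup H] [InnerProductSpace ℂ H] [CompleteSpace H]
    [NormedAddCommGroup K] [InnerProductSpace ℂ K] [CompleteSpace K]
    (a b : ℝ)
    (d : H →L[ℂ] K) (hd : d ∘L (adjoint d) = 1)
    (S : H →L[ℂ] H) (hS : IsSelfAdjoint S) (hS2 : S ∘L S = 1)
    (C : H →L[ℂ] H)
    (hC : C = (a : ℂ) • ((adjoint d) ∘L d) + (b : ℂ) • (1 - (adjoint d) ∘L d))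
    (U : H →L[ℂ] H) (hU : U = S ∘L C)
    (T : K →L[ℂ] K) (hT : T = d ∘L S ∘L (adjoint d))
    (h4 : a ≠ b)
    (lam : ℂ) (hlam0 : lam ≠ 0) (hlamb : lam ≠ (b : ℂ)) (hlamb' : lam ≠ -(b : ℂ))
    (ψ : H) (hψ0 : ψ ≠ 0) (hψ : U ψ = lam • ψ) :
    d ψ ≠ 0 ∧
    T (d ψ) = ((lam - (a * b : ℝ) * lam⁻¹) / ((a : ℂ) - (b : ℝ))) • d ψ ∧
    (lam.im = 0 ∨ ‖lam‖ ^ 2 = -(a * b)) := by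
  subst hC hU hT
  have hψ' : S (coin d a b ψ) = lam • ψ := hψ
  have hdψ := apply_ne_zero_of_apply_coin_eq_smul hS2 hψ0 hψ' hlamb hlamb'
  have hTdψ := comp_comp_adjoint_apply_eq_smul hd hS2 hψ' hlam0 (Complex.ofReal_injective.ne h4)
  push_cast
  refine ⟨hdψ, hTdψ, Complex.im_eq_zero_or_sq_norm_eq_of_im_sub_mul_inv hlam0 ?_⟩
  have hφ_real := (hS.conj_adjoint d).im_eq_zero_of_apply_eq_smul hdψ hTdψ
  rwa [← Complex.ofReal_sub, Complex.div_ofReal_im, div_eq_zero_iff,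
    or_iff_left (sub_ne_zero.mpr h4), ← Complex.ofReal_mul] at hφ_real

/-- Under the standing assumptions, if `Uψ = λψ` with `ψ ≠ 0`,
`λ ≠ 0`, `λ ≠ ±b`, then `dψ ≠ 0` (so `φ_{a,b}(λ)` is an eigenvalue of `T`), and
either `Im λ = 0` or `|λ|² = −ab`. -/
theorem stmt_7 {H K : Type*}
    [NormedAddCommGroup H] [InnerProductSpace ℂ H] [CompleteSpace H] [Nontrivial H]
    [NormedAddCommGroup K] [InnerProductSpace ℂ K] [CompleteSpace K] [Nontrivial K]
    (a b : ℝ)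
    (d : H →L[ℂ] K) (hd : d ∘L (adjoint d) = 1)
    (S : H →L[ℂ] H) (hS : IsSelfAdjoint S) (hS2 : S ∘L S = 1)
    (C : H →L[ℂ] H)
    (hC : C = (a : ℂ) • ((adjoint d) ∘L d) + (b : ℂ) • (1 - (adjoint d) ∘L d))
    (U : H →L[ℂ] H) (hU : U = S ∘L C)
    (T : K →L[ℂ] K) (hT : T = d ∘L S ∘L (adjoint d))
    (h1 : (adjoint d) ∘L d ≠ 1) (h2 : S ≠ 1) (h3 : S ≠ -1)
    (h4 : a ≠ b) (h5 : a ≠ -b) (h6 : a * b ≠ 0)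
    (lam : ℂ) (hlam0 : lam ≠ 0) (hlamb : lam ≠ (b : ℂ)) (hlamb' : lam ≠ -(b : ℂ))
    (ψ : H) (hψ0 : ψ ≠ 0) (hψ : U ψ = lam • ψ) :
    d ψ ≠ 0 ∧
    T (d ψ) = ((lam - (a * b : ℝ) * lam⁻¹) / ((a : ℂ) - (b : ℝ))) • d ψ ∧
    (lam.im = 0 ∨ ‖lam‖ ^ 2 = -(a * b)) :=
  stmt_7_general a b d hd S hS hS2 C hC U hU T hT h4 lam hlam0 hlamb hlamb' ψ hψ0 hψ
end

section
/- Assume the standing assumptions. The point spectrum of U is symmetric under complex conjugation: if λ ∈ ℂ is an eigenvalue of U (i.e. ker(U − λ·I) ≠ {0}), then its complex conjugate λ̄ is also an eigenvalue of U. -/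
open ContinuousLinearMap
open scoped InnerProductSpace

/-- Under the standing assumptions, the point spectrum of `U` is
symmetric under complex conjugation. -/
theorem stmt_8 {H K : Type*}
    [NormedAddCommGroup H] [InnerProductSpace ℂ H] [CompleteSpace H] [Nontrivial H]
    [NormedAddCommGroup K] [InnerProductSpace ℂ K] [CompleteSpace K] [Nontrivial K]
    (a b : ℝ)
    (d : H →L[ℂ] K) (hd : d ∘L (adjoint d) = 1)
    (S : H →L[ℂ] H) (hS : IsSelfAdjoint S) (hS2 : S ∘L S = 1)
    (C : H →L[ℂ] H)
    (hC : C = (a : ℂ) • ((adjoint d) ∘L d) + (b : ℂ) • (1 - (adjoint d) ∘L d))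
    (U : H →L[ℂ] H) (hU : U = S ∘L C)
    (h1 : (adjoint d) ∘L d ≠ 1) (h2 : S ≠ 1) (h3 : S ≠ -1)
    (h4 : a ≠ b) (h5 : a ≠ -b) (h6 : a * b ≠ 0)
    (lam : ℂ) (hlam : ∃ ψ : H, ψ ≠ 0 ∧ U ψ = lam • ψ) :
    ∃ φ : H, φ ≠ 0 ∧ U φ = (starRingEnd ℂ lam) • φ := by
  classical
  obtain ⟨ψ, hψ0, hUψ⟩ := hlam
  by_cases hre : lam.im = 0
  · exact ⟨ψ, hψ0, by rw [Complex.conj_eq_iff_im.mpr hre]; exact hUψ⟩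
  -- λ is non-real
  have hlam0 : lam ≠ 0 := fun h => hre (by simp [h])
  have hconjne : starRingEnd ℂ lam ≠ lam := fun h => hre (Complex.conj_eq_iff_im.mp h)
  set P : H →L[ℂ] H := adjoint d ∘L d with hPdef
  have hd' : ∀ y, d (adjoint d y) = y := fun y => by
    have := congrArg (fun T => T y) hd; simpa using this
  have hPP : ∀ x, P (P x) = P x := fun x => by simp [hPdef, hd']
  have hSS : ∀ x, S (S x) = x := fun x => by
    have := congrArg (fun T => T x) hS2; simpa using this
  have hSadj : adjoint S = S := hS.adjoint_eq
  have innS : ∀ x y : H, ⟪S x, y⟫_ℂ = ⟪x, S y⟫_ℂ := fun x y => by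
    conv_lhs => rw [← hSadj]
    exact adjoint_inner_left S y x
  have innP : ∀ x y : H, ⟪P x, y⟫_ℂ = ⟪x, P y⟫_ℂ := fun x y => by
    simp only [hPdef, ContinuousLinearMap.comp_apply]
    rw [adjoint_inner_left, ← adjoint_inner_right]
  have hCx : ∀ y : H, C y = (a:ℂ) • P y + (b:ℂ) • (y - P y) := fun y => by
    rw [hC]; simp [hPdef]
  have innC : ∀ x y : H, ⟪C x, y⟫_ℂ = ⟪x, C y⟫_ℂ := fun x y => by
    rw [hCx x, hCx y]
    simp only [inner_add_left, inner_add_right, inner_smul_left, inner_smul_right,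
      inner_sub_left, inner_sub_right, Complex.conj_ofReal, innP]
  -- basic eigen relations
  have hUψ' : S (C ψ) = lam • ψ := by
    have := hUψ; rw [hU] at this; simpa using this
  have hCψ : C ψ = lam • S ψ := by
    calc C ψ = S (S (C ψ)) := (hSS _).symm
    _ = S (lam • ψ) := by rw [hUψ']
    _ = lam • S ψ := map_smul _ _ _
  have hSψ0 : S ψ ≠ 0 := fun h => hψ0 (by rw [← hSS ψ, h, map_zero])
  -- C (C x) = (a+b) • C x - (a b) • x
  have hCC : ∀ x : H, C (C x) = ((a:ℂ)+b) • C x - ((a:ℂ)*b) • x := by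
    intro x
    have e2 : P (C x) = (a:ℂ) • P x := by
      rw [hCx x, map_add, map_smul, map_smul, map_sub, hPP]
      simp
    calc C (C x) = (a:ℂ) • P (C x) + (b:ℂ) • (C x - P (C x)) := hCx (C x)
    _ = (a:ℂ) • ((a:ℂ) • P x) + (b:ℂ) • (((a:ℂ) • P x + (b:ℂ) • (x - P x)) - (a:ℂ) • P x) := by
        rw [e2]; rw [hCx x]
    _ = ((a:ℂ)+b) • ((a:ℂ) • P x + (b:ℂ) • (x - P x)) - ((a:ℂ)*b) • x := by module
    _ = ((a:ℂ)+b) • C x - ((a:ℂ)*b) • x := by rw [← hCx x]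
  -- U (S ψ)
  have hSψeq : S ψ = lam⁻¹ • C ψ := by rw [hCψ, smul_smul, inv_mul_cancel₀ hlam0, one_smul]
  have hUSψ : U (S ψ) = ((a:ℂ)+b) • ψ - ((a:ℂ)*b/lam) • S ψ := by
    have hCS : C (S ψ) = lam⁻¹ • (((a:ℂ)+b) • C ψ - ((a:ℂ)*b) • ψ) := by
      rw [hSψeq, map_smul, hCC]
    have : U (S ψ) = S (C (S ψ)) := by rw [hU]; rfl
    rw [this, hCS, map_smul, map_sub, map_smul, map_smul, hUψ']
    match_scalars <;> field_simp <;> ring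
  -- inner product relations
  set n : ℂ := ⟪ψ, ψ⟫_ℂ with hn
  have hn0 : n ≠ 0 := inner_self_ne_zero.mpr hψ0
  set t : ℂ := ⟪S ψ, ψ⟫_ℂ with ht
  have ht_real : starRingEnd ℂ t = t := by
    rw [ht, inner_conj_symm, innS]
  have hnS : ⟪S ψ, S ψ⟫_ℂ = n := by rw [innS, hSS]
  -- lam * t = ⟪ψ, C ψ⟫ which is real
  have hA : lam * t = ⟪ψ, C ψ⟫_ℂ := by
    have w1 : ⟪S ψ, lam • ψ⟫_ℂ = lam * t := by rw [inner_smul_right]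
    have w2 : ⟪S ψ, S (C ψ)⟫_ℂ = ⟪ψ, C ψ⟫_ℂ := by rw [innS, hSS]
    rw [← w1, ← hUψ', w2]
  have hr_real : starRingEnd ℂ (⟪ψ, C ψ⟫_ℂ) = ⟪ψ, C ψ⟫_ℂ := by
    rw [inner_conj_symm, innC]
  have ht0 : t = 0 := by
    have h' : starRingEnd ℂ lam * t = lam * t := by
      calc starRingEnd ℂ lam * t = starRingEnd ℂ (lam * t) := by
            rw [map_mul, ht_real]
      _ = lam * t := by rw [hA, hr_real, ← hA]
    have := sub_eq_zero.mpr h'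
    rw [← sub_mul] at this
    rcases mul_eq_zero.mp this with h | h
    · exact absurd (sub_eq_zero.mp h) hconjne
    · exact h
  -- conj lam * n = -(ab/lam) * n
  have hB : starRingEnd ℂ lam * n = -((a:ℂ)*b/lam) * n := by
    have w1 : ⟪S ψ, U (S ψ)⟫_ℂ = -((a:ℂ)*b/lam) * n := by
      rw [hUSψ, inner_sub_right, inner_smul_right, inner_smul_right, ← ht, ht0, hnS]
      ring
    have w2 : ⟪S ψ, U (S ψ)⟫_ℂ = starRingEnd ℂ lam * n := by
      have : U (S ψ) = S (C (S ψ)) := by rw [hU]; rfl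
      rw [this, innS, hSS, ← innC, hCψ, inner_smul_left, hnS]
    rw [← w1, w2]
  have hconj : starRingEnd ℂ lam = -((a:ℂ)*b/lam) := mul_right_cancel₀ hn0 hB
  -- construct the eigenvector for conj lam
  set w : ℂ := lam - starRingEnd ℂ lam with hw
  have hw0 : w ≠ 0 := sub_ne_zero.mpr (Ne.symm hconjne)
  set α : ℂ := -((a:ℂ)+b) / w with hα
  have hαw : α * w = -((a:ℂ)+b) := div_mul_cancel₀ _ hw0
  refine ⟨α • ψ + S ψ, ?_, ?_⟩
  · intro hzero
    have hSψ : S ψ = (-α) • ψ := by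
      have h' := hzero
      rw [add_eq_zero_iff_eq_neg] at h'
      rw [neg_smul, h', neg_neg]
    have hψα : ψ = (α * α) • ψ := by
      calc ψ = S (S ψ) := (hSS ψ).symm
      _ = S ((-α) • ψ) := by rw [hSψ]
      _ = (-α) • S ψ := map_smul _ _ _
      _ = (-α) • ((-α) • ψ) := by rw [hSψ]
      _ = (α * α) • ψ := by rw [smul_smul]; ring_nf
    have hα2 : α * α = 1 := by
      have h'' : (α * α - 1) • ψ = 0 := by
        rw [sub_smul, one_smul, ← hψα, sub_self]
      rcases smul_eq_zero.mp h'' with h | h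
      · exact sub_eq_zero.mp h
      · exact absurd h hψ0
    -- α² = (a+b)²/w², so (a+b)² = w², but w² is negative real
    have hsq : ((a:ℂ)+b) * ((a:ℂ)+b) = w * w := by
      calc ((a:ℂ)+b) * ((a:ℂ)+b) = (α * w) * (α * w) := by rw [hαw]; ring
      _ = (α * α) * (w * w) := by ring
      _ = w * w := by rw [hα2, one_mul]
    have hwval : w = ((2 * lam.im : ℝ) : ℂ) * Complex.I := Complex.sub_conj lam
    have hre2 : ((a:ℝ)+b) * ((a:ℝ)+b) = -(2*lam.im * (2*lam.im)) := by
      have := congrArg Complex.re hsq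
      rw [hwval] at this
      simpa [Complex.mul_re, Complex.mul_im] using this
    have hab : (a:ℝ) + b ≠ 0 := fun h => h5 (by linarith)
    nlinarith [mul_self_nonneg ((a:ℝ)+b), mul_self_pos.mpr hab, mul_self_pos.mpr hre]
  · have hUφ : U (α • ψ + S ψ) = (α * lam + ((a:ℂ)+b)) • ψ + (starRingEnd ℂ lam) • S ψ := by
      rw [map_add, map_smul, hUψ, hUSψ]
      have h' : ((a:ℂ)*b/lam) = -(starRingEnd ℂ lam) := by rw [hconj]; ring
      rw [h']
      module
    rw [hUφ, smul_add, smul_smul]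
    congr 1
    have : α * lam + ((a:ℂ)+b) = starRingEnd ℂ lam * α := by
      have : α * w = -((a:ℂ)+b) := hαw
      rw [hw] at this
      linear_combination this
    rw [this]
end

section
/- If f ∈ K satisfies Tf = f, then S(d*f) = d*f and U(d*f) = a·(d*f). If f ∈ K satisfies Tf = −f, then S(d*f) = −d*f and U(d*f) = −a·(d*f). -/
open ContinuousLinearMap

local notation "⟪" x ", " y "⟫" => @inner ℂ _ _ x y

lemma key_fibre {H K : Type*}
    [NormedAddCommGroup H] [InnerProductSpace ℂ H] [CompleteSpace H]
    [NormedAddCommGroup K] [InnerProductSpace ℂ K] [CompleteSpace K]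
    (d : H →L[ℂ] K) (hd : d ∘L (adjoint d) = 1)
    (v : H) (g : K) (hdv : d v = g) (hn : ‖v‖ = ‖g‖) :
    v = (adjoint d) g := by
  have h1 : ⟪(adjoint d) g, v⟫ = ⟪g, g⟫ := by
    rw [adjoint_inner_left, hdv]
  have h2 : ⟪v, (adjoint d) g⟫ = ⟪g, g⟫ := by
    rw [adjoint_inner_right, hdv]
  have h3 : ⟪(adjoint d) g, (adjoint d) g⟫ = ⟪g, g⟫ := by
    rw [adjoint_inner_right]
    have : d ((adjoint d) g) = g := by
      have := congrArg (fun A => A g) hd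
      simpa using this
    rw [this]
  have h4 : ⟪v, v⟫ = ⟪g, g⟫ := by
    rw [inner_self_eq_norm_sq_to_K, inner_self_eq_norm_sq_to_K, hn]
  have : ⟪v - (adjoint d) g, v - (adjoint d) g⟫ = 0 := by
    rw [inner_sub_sub_self, h1, h2, h3, h4]; ring
  have := inner_self_eq_zero.mp this
  linear_combination (norm := abel) this

/-- If `Tf = f` then `S(d*f) = d*f` and `U(d*f) = a·(d*f)`;
if `Tf = −f` then `S(d*f) = −d*f` and `U(d*f) = −a·(d*f)`. -/
theorem stmt_10 {H K : Type*}
    [NormedAddCommGroup H] [InnerProductSpace ℂ H] [CompleteSpace H] [Nontrivial H]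
    [NormedAddCommGroup K] [InnerProductSpace ℂ K] [CompleteSpace K] [Nontrivial K]
    (a b : ℝ)
    (d : H →L[ℂ] K) (hd : d ∘L (adjoint d) = 1)
    (S : H →L[ℂ] H) (hS : IsSelfAdjoint S) (hS2 : S ∘L S = 1)
    (C : H →L[ℂ] H)
    (hC : C = (a : ℂ) • ((adjoint d) ∘L d) + (b : ℂ) • (1 - (adjoint d) ∘L d))
    (U : H →L[ℂ] H) (hU : U = S ∘L C)
    (T : K →L[ℂ] K) (hT : T = d ∘L S ∘L (adjoint d)) :
    (∀ f : K, T f = f →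
      S ((adjoint d) f) = (adjoint d) f ∧
      U ((adjoint d) f) = (a : ℂ) • (adjoint d) f) ∧
    (∀ f : K, T f = -f →
      S ((adjoint d) f) = -((adjoint d) f) ∧
      U ((adjoint d) f) = -((a : ℂ) • (adjoint d) f)) := by
  -- norm preservation facts
  have hdd : ∀ g : K, d ((adjoint d) g) = g := by
    intro g
    have := congrArg (fun A => A g) hd
    simpa using this
  have hnd : ∀ g : K, ‖(adjoint d) g‖ = ‖g‖ := by
    intro g
    have h : (⟪(adjoint d) g, (adjoint d) g⟫ : ℂ) = ⟪g, g⟫ := by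
      rw [adjoint_inner_right, hdd]
    rw [inner_self_eq_norm_sq_to_K, inner_self_eq_norm_sq_to_K] at h
    have h' : (‖(adjoint d) g‖:ℝ)^2 = (‖g‖:ℝ)^2 := by exact_mod_cast h
    nlinarith [norm_nonneg ((adjoint d) g), norm_nonneg g]
  have hnS : ∀ x : H, ‖S x‖ = ‖x‖ := by
    intro x
    have h : (⟪S x, S x⟫ : ℂ) = ⟪x, x⟫ := by
      rw [← adjoint_inner_left, hS.adjoint_eq]
      have := congrArg (fun A => A x) hS2
      simp only [comp_apply, one_apply] at this
      rw [show S (S x) = x from this]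
    rw [inner_self_eq_norm_sq_to_K, inner_self_eq_norm_sq_to_K] at h
    have h' : (‖S x‖:ℝ)^2 = (‖x‖:ℝ)^2 := by exact_mod_cast h
    nlinarith [norm_nonneg (S x), norm_nonneg x]
  -- C on range of d*
  have hCd : ∀ f : K, C ((adjoint d) f) = (a : ℂ) • (adjoint d) f := by
    intro f
    rw [hC]
    simp [comp_apply, hdd, sub_self]
  constructor
  · intro f hf
    have hdv : d (S ((adjoint d) f)) = f := by
      have := congrArg (fun A => A f) hT
      simp only [comp_apply] at this
      rw [← this, hf]
    have hn : ‖S ((adjoint d) f)‖ = ‖f‖ := by rw [hnS, hnd]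
    have hkey := key_fibre d hd _ f hdv hn
    refine ⟨hkey, ?_⟩
    rw [hU, comp_apply, hCd, map_smul, hkey]
  · intro f hf
    have hdv : d (S ((adjoint d) f)) = -f := by
      have := congrArg (fun A => A f) hT
      simp only [comp_apply] at this
      rw [← this, hf]
    have hn : ‖S ((adjoint d) f)‖ = ‖-f‖ := by rw [hnS, hnd, norm_neg]
    have hkey := key_fibre d hd _ (-f) hdv hn
    rw [map_neg] at hkey
    refine ⟨hkey, ?_⟩
    rw [hU, comp_apply, hCd, map_smul, hkey, smul_neg]
end

section
/- Let a ≠ b and let λ ∈ ℂ with λ ≠ 0 and λ² ≠ b². If g ∈ K with g ≠ 0 satisfies Tg = φ_{a,b}(λ)·g, then the vector ψ := b·(d*g) + λ·S(d*g) ∈ H is nonzero and satisfies Uψ = λψ; in particular λ is an eigenvalue of U. -/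
open ContinuousLinearMap

/-! With `f := d* g` and `P := d* d`, the coin acts as `C = b + (a - b) P`, so `C f = a f` and
`C (S f) = b S f + (a - b) φ f` where `φ = φ_{a,b}(λ)`, because `d (S f) = T g = φ g`.
The Joukowsky relation `λ (a - b) φ = λ² - a b` then makes `S C` map `b f + λ S f` to
`λ b f + λ² S f`. The vector is nonzero because applying the involution `S` to
`b f + λ S f = 0` gives `(b² - λ²) f = 0`, while `d f = g ≠ 0`. -/

def joukowsky {𝕜 : Type*} [Field 𝕜] (a b z : 𝕜) : 𝕜 := (z - a * b * z⁻¹) / (a - b)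

theorem mul_sub_mul_joukowsky {𝕜 : Type*} [Field 𝕜] {a b z : 𝕜} (hab : a ≠ b) (hz : z ≠ 0) :
    z * ((a - b) * joukowsky a b z) = z ^ 2 - a * b := by
  rw [joukowsky, mul_div_cancel₀ _ (sub_ne_zero.mpr hab)]
  field_simp

section CoinedWalk

variable {𝕜 E F : Type*} [NormedField 𝕜] [NormedAddCommGroup E] [NormedSpace 𝕜 E]
  [NormedAddCommGroup F] [NormedSpace 𝕜 F]

theorem smul_add_smul_apply_ne_zero_of_involutive {S : E →L[𝕜] E} (hS2 : S ∘L S = 1)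
    {b z : 𝕜} (hzb : z ^ 2 ≠ b ^ 2) {x : E} (hx : x ≠ 0) : b • x + z • S x ≠ 0 := by
  intro hψ
  have hSS : S (S x) = x := by simpa using congr($hS2 x)
  have hSψ : b • S x + z • x = 0 := by
    simpa [hSS] using congr(S $hψ)
  have : (b ^ 2 - z ^ 2) • x = 0 := by
    calc (b ^ 2 - z ^ 2) • x = b • (b • x + z • S x) - z • (b • S x + z • x) := by module
      _ = 0 := by rw [hψ, hSψ, smul_zero, smul_zero, sub_zero]
  exact hx ((smul_eq_zero.mp this).resolve_left (sub_ne_zero.mpr hzb.symm))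

theorem coin_apply_s12 {d : E →L[𝕜] F} {e : F →L[𝕜] E} {C : E →L[𝕜] E} {a b : 𝕜}
    (hC : C = a • (e ∘L d) + b • (1 - e ∘L d)) (x : E) :
    C x = b • x + (a - b) • e (d x) := by
  subst hC
  simp only [add_apply, smul_apply, comp_apply, sub_apply, one_apply_eq_self]
  module

theorem comp_coin_apply_eq_smul {d : E →L[𝕜] F} {e : F →L[𝕜] E} (hd : d ∘L e = 1)
    {S : E →L[𝕜] E} (hS2 : S ∘L S = 1) {C : E →L[𝕜] E} {a b z : 𝕜}
    (hC : C = a • (e ∘L d) + b • (1 - e ∘L d)) (hab : a ≠ b) (hz : z ≠ 0) {g : F}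
    (hg : d (S (e g)) = joukowsky a b z • g) :
    S (C (b • e g + z • S (e g))) = z • (b • e g + z • S (e g)) := by
  have hde : d (e g) = g := by simpa using congr($hd g)
  have hSS : S (S (e g)) = e g := by simpa using congr($hS2 (e g))
  have hJ := mul_sub_mul_joukowsky hab hz
  simp only [map_add, map_smul, coin_apply_s12 hC, hde, hg, hSS, smul_add, smul_smul]
  match_scalars
  · linear_combination hJ
  · ring

end CoinedWalk

theorem stmt_12_general {H K : Type*}
    [NormedAddCommGroup H] [InnerProductSpace ℂ H] [CompleteSpace H]
    [NormedAddCommGroup K] [InnerProductSpace ℂ K] [CompleteSpace K]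
    (a b : ℝ) (hab : a ≠ b)
    (d : H →L[ℂ] K) (hd : d ∘L (adjoint d) = 1)
    (S : H →L[ℂ] H) (hS2 : S ∘L S = 1)
    (C : H →L[ℂ] H)
    (hC : C = (a : ℂ) • ((adjoint d) ∘L d) + (b : ℂ) • (1 - (adjoint d) ∘L d))
    (U : H →L[ℂ] H) (hU : U = S ∘L C)
    (T : K →L[ℂ] K) (hT : T = d ∘L S ∘L (adjoint d))
    (lam : ℂ) (hlam0 : lam ≠ 0) (hlamb : lam ^ 2 ≠ (b : ℂ) ^ 2)
    (g : K) (hg0 : g ≠ 0)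
    (hg : T g = ((lam - (a * b : ℝ) * lam⁻¹) / ((a : ℂ) - (b : ℝ))) • g) :
    (b : ℂ) • ((adjoint d) g) + lam • S ((adjoint d) g) ≠ 0 ∧
    U ((b : ℂ) • ((adjoint d) g) + lam • S ((adjoint d) g)) =
      lam • ((b : ℂ) • ((adjoint d) g) + lam • S ((adjoint d) g)) ∧
    (∃ ψ : H, ψ ≠ 0 ∧ U ψ = lam • ψ) := by
  have hf0 : adjoint d g ≠ 0 := fun h ↦ hg0 (by simpa [h] using congr($hd g).symm)
  have hne := smul_add_smul_apply_ne_zero_of_involutive hS2 hlamb hf0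
  have hTg : d (S (adjoint d g)) = joukowsky (a : ℂ) b lam • g := by
    have hTg : T g = d (S (adjoint d g)) := by rw [hT]; rfl
    rw [← hTg, hg, joukowsky]
    push_cast
    rfl
  have heig := comp_coin_apply_eq_smul hd hS2 hC (by exact_mod_cast hab) hlam0 hTg
  rw [hU]
  exact ⟨hne, heig, _, hne, heig⟩

/-- If `a ≠ b`, `λ ≠ 0`, `λ² ≠ b²`, `g ≠ 0` and
`Tg = φ_{a,b}(λ)·g`, then `ψ := b·(d*g) + λ·S(d*g)` is nonzero and `Uψ = λψ`;
in particular `λ` is an eigenvalue of `U`. -/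
theorem stmt_12 {H K : Type*}
    [NormedAddCommGroup H] [InnerProductSpace ℂ H] [CompleteSpace H] [Nontrivial H]
    [NormedAddCommGroup K] [InnerProductSpace ℂ K] [CompleteSpace K] [Nontrivial K]
    (a b : ℝ) (hab : a ≠ b)
    (d : H →L[ℂ] K) (hd : d ∘L (adjoint d) = 1)
    (S : H →L[ℂ] H) (hS : IsSelfAdjoint S) (hS2 : S ∘L S = 1)
    (C : H →L[ℂ] H)
    (hC : C = (a : ℂ) • ((adjoint d) ∘L d) + (b : ℂ) • (1 - (adjoint d) ∘L d))
    (U : H →L[ℂ] H) (hU : U = S ∘L C)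
    (T : K →L[ℂ] K) (hT : T = d ∘L S ∘L (adjoint d))
    (lam : ℂ) (hlam0 : lam ≠ 0) (hlamb : lam ^ 2 ≠ (b : ℂ) ^ 2)
    (g : K) (hg0 : g ≠ 0)
    (hg : T g = ((lam - (a * b : ℝ) * lam⁻¹) / ((a : ℂ) - (b : ℝ))) • g) :
    (b : ℂ) • ((adjoint d) g) + lam • S ((adjoint d) g) ≠ 0 ∧
    U ((b : ℂ) • ((adjoint d) g) + lam • S ((adjoint d) g)) =
      lam • ((b : ℂ) • ((adjoint d) g) + lam • S ((adjoint d) g)) ∧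
    (∃ ψ : H, ψ ≠ 0 ∧ U ψ = lam • ψ) :=
  stmt_12_general a b hab d hd S hS2 C hC U hU T hT lam hlam0 hlamb g hg0 hg
end

section
/- Assume the standing assumptions. Let λ ∈ ℂ with λ ∉ {a, −a, b, −b} and let ψ ∈ H with ψ ≠ 0 satisfy Uψ = λψ. Set f := dψ. Then ψ = ((a − b)/(λ² − b²))·(b·(d*f) + λ·S(d*f)), and f is orthogonal to ker(T² − I), i.e. ⟨f, g⟩ = 0 for every g ∈ K with T(Tg) = g. -/
open ContinuousLinearMap

/-!
Since `S` is an involution, `Uψ = λψ` says `Cψ = λ Sψ`, i.e. `(a - b) d*dψ = λ Sψ - bψ`.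
Applying `S` to this gives a second relation, and eliminating `Sψ` between the two yields the
formula for `ψ`. Applying `d` to both relations shows that `f = dψ` satisfies
`λ(a - b) Tf = (λ² - ab) f`, hence `λ²(a - b)² T²f = (λ² - ab)² f`. For `g` with `T²g = g`,
self-adjointness of `T` gives `⟪T²f, g⟫ = ⟪f, g⟫`, and the two coefficients differ because
`(λ² - ab)² - λ²(a - b)² = (λ² - a²)(λ² - b²)`; so `⟪f, g⟫ = 0`.
-/

theorem sq_sub_sq_ne_zero {R : Type*} [CommRing R] [NoZeroDivisors R] {x y : R}
    (h : x ≠ y) (h' : x ≠ -y) : x ^ 2 - y ^ 2 ≠ 0 :=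
  sub_ne_zero.2 fun hsq => (sq_eq_sq_iff_eq_or_eq_neg.1 hsq).elim h h'

theorem LinearMap.IsSymmetric.inner_eq_zero_of_smul_apply_eq_smul {𝕜 E : Type*} [RCLike 𝕜]
    [NormedAddCommGroup E] [InnerProductSpace 𝕜 E] {A : E →ₗ[𝕜] E} (hA : A.IsSymmetric)
    {c e : 𝕜} {x g : E} (hx : c • A x = e • x) (hce : c ^ 2 ≠ e ^ 2) (hg : A (A g) = g) :
    inner 𝕜 x g = 0 := by
  have hsq : c ^ 2 • A (A x) = e ^ 2 • x :=
    calc c ^ 2 • A (A x) = c • A (c • A x) := by rw [map_smul, smul_smul, sq]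
      _ = c • e • A x := by rw [hx, map_smul]
      _ = e ^ 2 • x := by rw [smul_comm, hx, smul_smul, sq]
  have hAA : inner 𝕜 (A (A x)) g = inner 𝕜 x g := by rw [hA, hA, hg]
  have hinner := congrArg (fun v => inner 𝕜 v g) hsq
  simp only [inner_smul_left, hAA] at hinner
  by_contra hxg
  exact hce ((starRingEnd 𝕜).injective (mul_right_cancel₀ hxg hinner))

namespace QuantumWalk

variable {H K : Type*} [NormedAddCommGroup H] [InnerProductSpace ℂ H] [CompleteSpace H]
  [NormedAddCommGroup K] [InnerProductSpace ℂ K] [CompleteSpace K]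
  {d : H →L[ℂ] K} {S : H →L[ℂ] H} {a b lam : ℂ} {ψ : H}

theorem smul_adjoint_apply_eq (hS2 : S ∘L S = 1)
    (hψ : (S ∘L (a • (adjoint d ∘L d) + b • (1 - adjoint d ∘L d))) ψ = lam • ψ) :
    (a - b) • adjoint d (d ψ) = lam • S ψ - b • ψ := by
  have hSS (x : H) : S (S x) = x := DFunLike.congr_fun hS2 x
  have hC : (a • (adjoint d ∘L d) + b • (1 - adjoint d ∘L d)) ψ = lam • S ψ := by
    rw [← map_smul, ← hψ, comp_apply, hSS]
  simp only [add_apply, smul_apply, comp_apply, sub_apply, one_apply_eq_self] at hC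
  linear_combination (norm := module) hC

theorem smul_apply_adjoint_apply_eq (hS2 : S ∘L S = 1)
    (h : (a - b) • adjoint d (d ψ) = lam • S ψ - b • ψ) :
    (a - b) • S (adjoint d (d ψ)) = lam • ψ - b • S ψ := by
  have hSS (x : H) : S (S x) = x := DFunLike.congr_fun hS2 x
  simpa only [map_smul, map_sub, hSS] using congrArg S h

theorem smul_eigenvector_eq (hS2 : S ∘L S = 1)
    (h : (a - b) • adjoint d (d ψ) = lam • S ψ - b • ψ) :
    (a - b) • (b • adjoint d (d ψ) + lam • S (adjoint d (d ψ))) = (lam ^ 2 - b ^ 2) • ψ := by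
  have hSψ := smul_apply_adjoint_apply_eq hS2 h
  calc (a - b) • (b • adjoint d (d ψ) + lam • S (adjoint d (d ψ)))
      = b • ((a - b) • adjoint d (d ψ)) + lam • ((a - b) • S (adjoint d (d ψ))) := by module
    _ = (lam ^ 2 - b ^ 2) • ψ := by rw [h, hSψ]; module

theorem smul_discriminant_apply_eq (hd : d ∘L adjoint d = 1) (hS2 : S ∘L S = 1)
    (h : (a - b) • adjoint d (d ψ) = lam • S ψ - b • ψ) :
    (lam * (a - b)) • d (S (adjoint d (d ψ))) = (lam ^ 2 - a * b) • d ψ := by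
  have hdd (x : K) : d (adjoint d x) = x := DFunLike.congr_fun hd x
  have hdS : lam • d (S ψ) = a • d ψ := by
    have h' := congrArg d h
    simp only [map_smul, map_sub, hdd] at h'
    linear_combination (norm := module) -h'
  have hdSd : (a - b) • d (S (adjoint d (d ψ))) = lam • d ψ - b • d (S ψ) := by
    simpa only [map_smul, map_sub] using congrArg d (smul_apply_adjoint_apply_eq hS2 h)
  calc (lam * (a - b)) • d (S (adjoint d (d ψ)))
      = lam • lam • d ψ - b • (lam • d (S ψ)) := by rw [mul_smul, hdSd]; module
    _ = (lam ^ 2 - a * b) • d ψ := by rw [hdS]; module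

end QuantumWalk

theorem stmt_13_general {H K : Type*}
    [NormedAddCommGroup H] [InnerProductSpace ℂ H] [CompleteSpace H]
    [NormedAddCommGroup K] [InnerProductSpace ℂ K] [CompleteSpace K]
    (a b : ℝ)
    (d : H →L[ℂ] K) (hd : d ∘L (adjoint d) = 1)
    (S : H →L[ℂ] H) (hS : IsSelfAdjoint S) (hS2 : S ∘L S = 1)
    (C : H →L[ℂ] H)
    (hC : C = (a : ℂ) • ((adjoint d) ∘L d) + (b : ℂ) • (1 - (adjoint d) ∘L d))
    (U : H →L[ℂ] H) (hU : U = S ∘L C)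
    (T : K →L[ℂ] K) (hT : T = d ∘L S ∘L (adjoint d))
    (lam : ℂ) (hlam : lam ∉ ({(a : ℂ), -(a : ℂ), (b : ℂ), -(b : ℂ)} : Set ℂ))
    (ψ : H) (hψ : U ψ = lam • ψ) :
    ψ = (((a : ℂ) - (b : ℝ)) / (lam ^ 2 - (b : ℂ) ^ 2)) •
        ((b : ℂ) • ((adjoint d) (d ψ)) + lam • S ((adjoint d) (d ψ))) ∧
    ∀ g : K, T (T g) = g → (inner ℂ (d ψ) g : ℂ) = 0 := by
  subst hC hU hT
  obtain ⟨hla, hlna, hlb, hlnb⟩ : lam ≠ a ∧ lam ≠ -a ∧ lam ≠ b ∧ lam ≠ -b := by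
    simpa [not_or] using hlam
  have hcoin := QuantumWalk.smul_adjoint_apply_eq hS2 hψ
  refine ⟨?_, fun g hg => ?_⟩
  · rw [div_eq_inv_mul, mul_smul, QuantumWalk.smul_eigenvector_eq hS2 hcoin,
      inv_smul_smul₀ (sq_sub_sq_ne_zero hlb hlnb)]
  · have hcoeff : (lam * (a - b)) ^ 2 ≠ (lam ^ 2 - a * b) ^ 2 := by
      rw [Ne, eq_comm, ← sub_eq_zero,
        show (lam ^ 2 - a * b) ^ 2 - (lam * (a - b)) ^ 2 = (lam ^ 2 - a ^ 2) * (lam ^ 2 - b ^ 2) by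
          ring]
      exact mul_ne_zero (sq_sub_sq_ne_zero hla hlna) (sq_sub_sq_ne_zero hlb hlnb)
    exact (hS.conj_adjoint d).isSymmetric.inner_eq_zero_of_smul_apply_eq_smul
      (QuantumWalk.smul_discriminant_apply_eq hd hS2 hcoin) hcoeff hg

/-- Under the standing assumptions, if `Uψ = λψ` with `ψ ≠ 0` and
`λ ∉ {a, −a, b, −b}`, then with `f := dψ` we have
`ψ = ((a−b)/(λ²−b²))·(b·(d*f) + λ·S(d*f))` and `f ⊥ ker(T²−I)`. -/
theorem stmt_13 {H K : Type*}
    [NormedAddCommGroup H] [InnerProductSpace ℂ H] [CompleteSpace H] [Nontrivial H]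
    [NormedAddCommGroup K] [InnerProductSpace ℂ K] [CompleteSpace K] [Nontrivial K]
    (a b : ℝ)
    (d : H →L[ℂ] K) (hd : d ∘L (adjoint d) = 1)
    (S : H →L[ℂ] H) (hS : IsSelfAdjoint S) (hS2 : S ∘L S = 1)
    (C : H →L[ℂ] H)
    (hC : C = (a : ℂ) • ((adjoint d) ∘L d) + (b : ℂ) • (1 - (adjoint d) ∘L d))
    (U : H →L[ℂ] H) (hU : U = S ∘L C)
    (T : K →L[ℂ] K) (hT : T = d ∘L S ∘L (adjoint d))
    (h1 : (adjoint d) ∘L d ≠ 1) (h2 : S ≠ 1) (h3 : S ≠ -1)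
    (h4 : a ≠ b) (h5 : a ≠ -b) (h6 : a * b ≠ 0)
    (lam : ℂ) (hlam : lam ∉ ({(a : ℂ), -(a : ℂ), (b : ℂ), -(b : ℂ)} : Set ℂ))
    (ψ : H) (hψ0 : ψ ≠ 0) (hψ : U ψ = lam • ψ) :
    ψ = (((a : ℂ) - (b : ℝ)) / (lam ^ 2 - (b : ℂ) ^ 2)) •
        ((b : ℂ) • ((adjoint d) (d ψ)) + lam • S ((adjoint d) (d ψ))) ∧
    ∀ g : K, T (T g) = g → (inner ℂ (d ψ) g : ℂ) = 0 :=
  stmt_13_general a b d hd S hS hS2 C hC U hU T hT lam hlam ψ hψ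
end

section
/- Assume the standing assumptions. Then every λ ∈ σ(U) satisfies Im λ = 0 or |λ|² = −a·b; that is, the spectrum of U is contained in the union of the real axis and the circle of radius √(−ab) centered at the origin (the circle part being empty when a·b > 0). -/
/-!
With `P = d* d` an orthogonal projection, `C = aP + b(1 - P)` and `C' = bP + a(1 - P)`
satisfy `C C' = C' C = ab`, so `W = C' S` satisfies `U W = W U = ab`, i.e. `W = ab U⁻¹`
whenever `ab ≠ 0`. Since `C + C'` is scalar, `U - W = SC - C'S` is self-adjoint.
For `λ ≠ 0` in `σ(U)` the factorization `(λ - ab/λ) - (U - W) = (λ - U)(1 + λ⁻¹ W)` into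
commuting factors puts `λ - ab/λ` in the real spectrum of `U - W`, and
`Im (λ - ab/λ) = Im λ · (|λ|² + ab) / |λ|²`.
-/

open ContinuousLinearMap

theorem spectrum.sub_div_mem_sub {𝕜 A : Type*} [Field 𝕜] [Ring A] [Algebra 𝕜 A]
    {u w : A} {c lam : 𝕜} (huw : u * w = algebraMap 𝕜 A c) (hwu : Commute u w)
    (hlam0 : lam ≠ 0) (hlam : lam ∈ spectrum 𝕜 u) :
    lam - c / lam ∈ spectrum 𝕜 (u - w) := by
  rw [spectrum.mem_iff] at hlam ⊢
  contrapose! hlam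
  have hfactor : algebraMap 𝕜 A (lam - c / lam) - (u - w) =
      (algebraMap 𝕜 A lam - u) * (1 + lam⁻¹ • w) := by
    rw [mul_add, mul_one, mul_smul_comm, sub_mul, huw, Algebra.algebraMap_eq_smul_one,
      Algebra.algebraMap_eq_smul_one, Algebra.algebraMap_eq_smul_one, smul_mul_assoc, one_mul]
    match_scalars <;> field_simp
    ring
  have hcomm : Commute (algebraMap 𝕜 A lam - u) (1 + lam⁻¹ • w) :=
    (Commute.one_right _).add_right
      (((Algebra.commute_algebraMap_left lam w).sub_left hwu).smul_right _)
  rw [hfactor] at hlam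
  exact (hcomm.isUnit_mul_iff.mp hlam).1

theorem IsSelfAdjoint.mul_sub_mul_of_commute_add {R : Type*} [Ring R] [StarRing R]
    {s c c' : R} (hs : IsSelfAdjoint s) (hc : IsSelfAdjoint c) (hc' : IsSelfAdjoint c')
    (h : Commute s (c + c')) : IsSelfAdjoint (s * c - c' * s) := by
  rw [IsSelfAdjoint, star_sub, star_mul, star_mul, hs.star_eq, hc.star_eq, hc'.star_eq,
    sub_eq_sub_iff_add_eq_add, ← add_mul, ← mul_add]
  exact h.eq.symm

theorem IsSelfAdjoint.smul_add_smul_one_sub {R A : Type*} [CommRing R] [StarRing R] [Ring A]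
    [StarRing A] [Algebra R A] [StarModule R A] {p : A} (hp : IsSelfAdjoint p) {x y : R}
    (hx : IsSelfAdjoint x) (hy : IsSelfAdjoint y) : IsSelfAdjoint (x • p + y • (1 - p)) :=
  (hx.smul hp).add (hy.smul ((IsSelfAdjoint.one A).sub hp))

theorem IsIdempotentElem.smul_add_smul_one_sub_mul {R A : Type*} [CommRing R] [Ring A]
    [Algebra R A]
    {p : A} (hp : IsIdempotentElem p) (a b : R) :
    (a • p + b • (1 - p)) * (b • p + a • (1 - p)) = algebraMap R A (a * b) := by
  simp only [add_mul, mul_add, smul_mul_assoc, mul_smul_comm, mul_sub, sub_mul, hp.eq, mul_one,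
    one_mul, Algebra.algebraMap_eq_smul_one]
  module

theorem Complex.im_eq_zero_or_sq_norm_of_im_sub_div {z : ℂ} {c : ℝ} (hz : z ≠ 0)
    (h : (z - c / z).im = 0) : z.im = 0 ∨ ‖z‖ ^ 2 = -c := by
  have hn : Complex.normSq z ≠ 0 := by simpa using hz
  rw [Complex.sub_im, Complex.div_im] at h
  simp only [Complex.ofReal_im, Complex.ofReal_re, zero_mul, zero_div, zero_sub,
    sub_neg_eq_add] at h
  have : z.im * (Complex.normSq z + c) = 0 := by
    rw [← mul_zero (Complex.normSq z), ← h]; field_simp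
  rw [Complex.sq_norm, ← add_eq_zero_iff_eq_neg]
  exact (mul_eq_zero.mp this).imp_right id

theorem ContinuousLinearMap.isStarProjection_adjoint_comp_self {𝕜 E F : Type*} [RCLike 𝕜]
    [NormedAddCommGroup E] [InnerProductSpace 𝕜 E] [CompleteSpace E]
    [NormedAddCommGroup F] [InnerProductSpace 𝕜 F] [CompleteSpace F]
    {d : E →L[𝕜] F} (hd : d ∘L adjoint d = 1) : IsStarProjection (adjoint d ∘L d) where
  isIdempotentElem := by
    change adjoint d ∘L (d ∘L adjoint d) ∘L d = adjoint d ∘L d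
    rw [hd]
    rfl
  isSelfAdjoint := (isPositive_adjoint_comp_self d).isSelfAdjoint

theorem stmt_19_general {H K : Type*}
    [NormedAddCommGroup H] [InnerProductSpace ℂ H] [CompleteSpace H]
    [NormedAddCommGroup K] [InnerProductSpace ℂ K] [CompleteSpace K]
    (a b : ℝ)
    (d : H →L[ℂ] K) (hd : d ∘L (adjoint d) = 1)
    (S : H →L[ℂ] H) (hS : IsSelfAdjoint S) (hS2 : S ∘L S = 1)
    (C : H →L[ℂ] H)
    (hC : C = (a : ℂ) • ((adjoint d) ∘L d) + (b : ℂ) • (1 - (adjoint d) ∘L d))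
    (U : H →L[ℂ] H) (hU : U = S ∘L C) :
    ∀ lam ∈ spectrum ℂ U, lam.im = 0 ∨ ‖lam‖ ^ 2 = -(a * b) := by
  intro lam hlam
  rcases eq_or_ne lam 0 with rfl | hlam0
  · exact Or.inl rfl
  set p := adjoint d ∘L d
  obtain ⟨hp, hp_sa⟩ := isStarProjection_adjoint_comp_self hd
  have hsa (x y : ℝ) : IsSelfAdjoint ((x : ℂ) • p + (y : ℂ) • (1 - p)) :=
    hp_sa.smul_add_smul_one_sub (Complex.conj_ofReal x) (Complex.conj_ofReal y)
  set C' := (b : ℂ) • p + (a : ℂ) • (1 - p)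
  have hCC' : C * C' = algebraMap ℂ _ (a * b) := hC ▸ hp.smul_add_smul_one_sub_mul _ _
  have hC'C : C' * C = algebraMap ℂ _ (a * b) := by
    rw [hC, hp.smul_add_smul_one_sub_mul, mul_comm]
  have hS2' : S * S = 1 := hS2
  have hU' : U = S * C := hU
  have hUw : U * (C' * S) = algebraMap ℂ _ (a * b) := by
    rw [hU', show S * C * (C' * S) = S * (C * C') * S by simp only [mul_assoc], hCC',
      ← Algebra.commutes, mul_assoc, hS2', mul_one]
  have hwU : (C' * S) * U = algebraMap ℂ _ (a * b) := by
    rw [hU', mul_assoc, ← mul_assoc S, hS2', one_mul, hC'C]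
  have hW : IsSelfAdjoint (U - C' * S) := by
    refine hU' ▸ hS.mul_sub_mul_of_commute_add (hC ▸ hsa a b) (hsa b a) ?_
    convert Algebra.commute_algebraMap_right ((a : ℂ) + b) S using 1
    rw [hC, Algebra.algebraMap_eq_smul_one]
    module
  have hmem := spectrum.sub_div_mem_sub hUw (hUw.trans hwU.symm) hlam0 hlam
  rw [← Complex.ofReal_mul] at hmem
  exact Complex.im_eq_zero_or_sq_norm_of_im_sub_div hlam0 (hW.im_eq_zero_of_mem_spectrum hmem)

/-- Under the standing assumptions, every `λ ∈ σ(U)` satisfies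
`Im λ = 0` or `|λ|² = −ab`; i.e. `σ(U)` is contained in the union of the real
axis and the circle of radius `√(−ab)` about the origin. -/
theorem stmt_19 {H K : Type*}
    [NormedAddCommGroup H] [InnerProductSpace ℂ H] [CompleteSpace H] [Nontrivial H]
    [NormedAddCommGroup K] [InnerProductSpace ℂ K] [CompleteSpace K] [Nontrivial K]
    (a b : ℝ)
    (d : H →L[ℂ] K) (hd : d ∘L (adjoint d) = 1)
    (S : H →L[ℂ] H) (hS : IsSelfAdjoint S) (hS2 : S ∘L S = 1)
    (C : H →L[ℂ] H)
    (hC : C = (a : ℂ) • ((adjoint d) ∘L d) + (b : ℂ) • (1 - (adjoint d) ∘L d))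
    (U : H →L[ℂ] H) (hU : U = S ∘L C)
    (h1 : (adjoint d) ∘L d ≠ 1) (h2 : S ≠ 1) (h3 : S ≠ -1)
    (h4 : a ≠ b) (h5 : a ≠ -b) (h6 : a * b ≠ 0) :
    ∀ lam ∈ spectrum ℂ U, lam.im = 0 ∨ ‖lam‖ ^ 2 = -(a * b) :=
  stmt_19_general a b d hd S hS hS2 C hC U hU
end
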